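/- arXiv:2008.00985 — 2 statements merged into one kernel-verified Lean document; each statement's English description precedes it below -/
import Mathlib

section
/- Let A = k⟨X⟩/(w₁,…,w_t) be a monomial non-unital algebra graded by the free monoid ⟨X⟩, with noncommutative Hilbert series R = 1 + Σ_{m} dim(A_m)·m (sum over nonempty monomials m). Then every coefficient of the formal inverse series R^{−1} in noncommuting variables X lies in {−1, 0, 1}. -/
/-- `u` is a nonzero monomial of the monomial algebra `k⟨X⟩/(R)`. -/
def IsNZ {X : Type*} (R : Finset (List X)) (u : List X) : Prop :=
  u ≠ [] ∧ ∀ r ∈ R, ¬ r <:+: u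

open scoped Classical in
/-- The coefficient of the noncommutative Hilbert series `R = 1 + Σ_m dim(A_m)·m` of the
monomial algebra `A = k⟨X⟩/(R)`: `dim A_m = 1` iff `m` is a nonzero monomial of `A`. -/
noncomputable def hilbCoeff {X : Type*} (R : Finset (List X)) (m : List X) : ℤ :=
  if m = [] then 1 else if IsNZ R m then 1 else 0

/-!
The set `F` of words with coefficient `1` in the Hilbert series contains the empty word and is
closed under prefixes. The words not in `F` all of whose proper prefixes lie in `F` then form a
prefix code `B`, and `F · (1 - Σ x) = 1 - B` as series. Hence `F⁻¹ = (1 - Σ x) · B*`, whose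
coefficient at a word `m ≠ 1` is `[m ∈ B*] - [tail m ∈ B*]`; unique factorisation over the
prefix code makes `[· ∈ B*]` a `0`/`1` function.
-/

section PrefixClosed

variable {X : Type*} (P : List X → Prop) [DecidablePred P]

def maxPrefixLength (m : List X) : ℕ :=
  Nat.findGreatest (fun i => P (m.take i)) m.length

theorem maxPrefixLength_le (m : List X) : maxPrefixLength P m ≤ m.length :=
  Nat.findGreatest_le _

variable {P} in
theorem take_mem_iff_le_maxPrefixLength (hP : ∀ ⦃u v⦄, u <+: v → P v → P u) (hnil : P [])
    {m : List X} {i : ℕ} (hi : i ≤ m.length) :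
    P (m.take i) ↔ i ≤ maxPrefixLength P m := by
  refine ⟨Nat.le_findGreatest (P := fun i => P (m.take i)) hi, fun hle => ?_⟩
  have hmax : P (m.take (maxPrefixLength P m)) :=
    Nat.findGreatest_spec (P := fun i => P (m.take i)) (Nat.zero_le _) (by simpa using hnil)
  exact hP (List.take_prefix_take_left hle) hmax

/-- The indicator function of `B*`, where `B` is the prefix code of minimal words outside `P`:
the `B`-prefix of a word `m ∉ P` has length `maxPrefixLength P m + 1`. -/
def codeStarIndicator (m : List X) : ℤ :=
  if h : m = [] then 1
  else if P m then 0
  else codeStarIndicator (m.drop (maxPrefixLength P m + 1))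
termination_by m.length
decreasing_by
  simp only [List.length_drop]
  exact Nat.sub_lt (List.length_pos_iff.mpr h) (Nat.succ_pos _)

theorem codeStarIndicator_eq_zero_or_one (m : List X) :
    codeStarIndicator P m = 0 ∨ codeStarIndicator P m = 1 := by
  fun_induction codeStarIndicator P m <;> simp_all

theorem codeStarIndicator_nil : codeStarIndicator P ([] : List X) = 1 := by
  rw [codeStarIndicator, dif_pos rfl]

theorem codeStarIndicator_eq_zero {m : List X} (hm : m ≠ []) (h : P m) :
    codeStarIndicator P m = 0 := by
  rw [codeStarIndicator, dif_neg hm, if_pos h]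

theorem codeStarIndicator_eq_drop {m : List X} (hm : m ≠ []) (h : ¬ P m) :
    codeStarIndicator P m = codeStarIndicator P (m.drop (maxPrefixLength P m + 1)) := by
  rw [codeStarIndicator, dif_neg hm, if_neg h]

def invCoeff (m : List X) : ℤ :=
  if m = [] then 1 else codeStarIndicator P m - codeStarIndicator P m.tail

theorem invCoeff_mem (m : List X) :
    invCoeff P m = -1 ∨ invCoeff P m = 0 ∨ invCoeff P m = 1 := by
  unfold invCoeff
  split_ifs
  · simp
  · rcases codeStarIndicator_eq_zero_or_one P m with h | h <;>
      rcases codeStarIndicator_eq_zero_or_one P m.tail with h' | h' <;> simp [h, h']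

theorem sum_range_invCoeff_drop {m : List X} {k : ℕ} (hk : k ≤ m.length) :
    ∑ i ∈ Finset.range k, invCoeff P (m.drop i) =
      codeStarIndicator P m - codeStarIndicator P (m.drop k) := by
  have step : ∀ i ∈ Finset.range k, invCoeff P (m.drop i) =
      codeStarIndicator P (m.drop i) - codeStarIndicator P (m.drop (i + 1)) := by
    intro i hi
    have : m.drop i ≠ [] := by
      simpa only [ne_eq, List.drop_eq_nil_iff, not_le] using (Finset.mem_range.1 hi).trans_le hk
    rw [invCoeff, if_neg this, List.tail_drop]
  rw [Finset.sum_congr rfl step, Finset.sum_range_sub', List.drop_zero]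

variable {P}

theorem sum_indicator_take_mul (hP : ∀ ⦃u v⦄, u <+: v → P v → P u) (hnil : P [])
    (f : List X → ℤ) (m : List X) :
    ∑ i ∈ Finset.range (m.length + 1), (if P (m.take i) then 1 else 0) * f (m.drop i) =
      ∑ i ∈ Finset.range (maxPrefixLength P m + 1), f (m.drop i) := by
  simp only [ite_mul, one_mul, zero_mul]
  rw [← Finset.sum_filter]
  congr 1
  ext i
  have hle := maxPrefixLength_le P m
  simp only [Finset.mem_filter, Finset.mem_range]
  constructor
  · rintro ⟨hi, h⟩
    exact Nat.lt_succ_of_le ((take_mem_iff_le_maxPrefixLength hP hnil (by omega)).1 h)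
  · intro hi
    exact ⟨by omega, (take_mem_iff_le_maxPrefixLength hP hnil (by omega)).2 (by omega)⟩

theorem sum_indicator_take_mul_invCoeff (hP : ∀ ⦃u v⦄, u <+: v → P v → P u) (hnil : P [])
    (m : List X) :
    ∑ i ∈ Finset.range (m.length + 1), (if P (m.take i) then 1 else 0) * invCoeff P (m.drop i) =
      if m = [] then 1 else 0 := by
  rcases eq_or_ne m [] with rfl | hm
  · simp [invCoeff, hnil]
  rw [sum_indicator_take_mul hP hnil, if_neg hm]
  have hmax := take_mem_iff_le_maxPrefixLength hP hnil (le_refl m.length)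
  rw [List.take_length] at hmax
  by_cases h : P m
  · have hlen : maxPrefixLength P m = m.length :=
      le_antisymm (maxPrefixLength_le P m) (hmax.1 h)
    rw [hlen, Finset.sum_range_succ, sum_range_invCoeff_drop P le_rfl, List.drop_length,
      codeStarIndicator_eq_zero P hm h, codeStarIndicator_nil, invCoeff, if_pos rfl]
    ring
  · have hlt : maxPrefixLength P m < m.length :=
      (maxPrefixLength_le P m).lt_of_ne fun he => h (hmax.2 he.ge)
    rw [sum_range_invCoeff_drop P hlt, ← codeStarIndicator_eq_drop P hm h, sub_self]

end PrefixClosed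

open scoped Classical in
theorem hilbCoeff_eq_ite {X : Type*} (R : Finset (List X)) (m : List X) :
    hilbCoeff R m = if m = [] ∨ IsNZ R m then 1 else 0 := by
  unfold hilbCoeff
  split_ifs <;> tauto

theorem eq_nil_or_isNZ_of_prefix {X : Type*} {R : Finset (List X)} {u v : List X}
    (huv : u <+: v) (hv : v = [] ∨ IsNZ R v) : u = [] ∨ IsNZ R u := by
  rcases hv with rfl | hv
  · exact Or.inl (List.prefix_nil.1 huv)
  · exact (eq_or_ne u []).imp_right fun hu =>
      ⟨hu, fun r hr hru => hv.2 r hr (hru.trans huv.isInfix)⟩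

theorem stmt8_general {X : Type*} (R : Finset (List X)) :
    ∃ S : List X → ℤ,
      (∀ m : List X,
        (∑ i ∈ Finset.range (m.length + 1), hilbCoeff R (m.take i) * S (m.drop i)) =
          if m = [] then 1 else 0) ∧
      (∀ m : List X, S m = -1 ∨ S m = 0 ∨ S m = 1) := by
  classical
  let P : List X → Prop := fun m => m = [] ∨ IsNZ R m
  refine ⟨invCoeff P, fun m => ?_, invCoeff_mem P⟩
  simp only [hilbCoeff_eq_ite]
  exact sum_indicator_take_mul_invCoeff (fun _ _ => eq_nil_or_isNZ_of_prefix) (Or.inl rfl) m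

open scoped Classical in
/-- For a non-unital monomial algebra `A = k⟨X⟩/(w₁,…,w_t)` with antichain relations of
degree `≥ 2`, every coefficient of the formal inverse `R⁻¹` of the noncommutative Hilbert
series `R = 1 + Σ_m dim(A_m)·m` lies in `{−1, 0, 1}`.  The inverse is expressed by its
coefficient function  `S : ⟨X⟩ → ℤ` satisfying the convolution identity
`Σ_{m = u ++ v} R(u)·S(v) = δ_{m,1}`. -/
theorem stmt8 {X : Type*} (R : Finset (List X))
    (hdeg : ∀ r ∈ R, 2 ≤ r.length)
    (hanti : ∀ r ∈ R, ∀ s ∈ R, r <:+: s → r = s) :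
    ∃ S : List X → ℤ,
      (∀ m : List X,
        (∑ i ∈ Finset.range (m.length + 1), hilbCoeff R (m.take i) * S (m.drop i)) =
          if m = [] then 1 else 0) ∧
      (∀ m : List X, S m = -1 ∨ S m = 0 ∨ S m = 1) :=
  stmt8_general R
end

section
/- Let X = Gr(V)/⟨r₁,…,r_m⟩ be a monomial quotient of the exterior algebra on generators V = {x, x₂, …, x_N}, with differential D(ξ) = (x + x₂ + ⋯ + x_N)ξ. Let Y_x be the span of monomials m that are nonzero in X, do not contain x, and satisfy x·m = 0 in X. Then Y_x is a subcomplex of (X, D) and the inclusion Y_x ↪ X is a quasi-isomorphism: H(X) ≅ H(Y_x). -/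
/-!
Write `D = x· + E`, where `E` is multiplication by the other generators. `E` preserves the span
`X₀` of the monomials avoiding `x` as well as `Y_x`, and `x` kills `Y_x`, so `Y_x` is a
subcomplex. Every `ξ` is `a + x·c` with `a, c ∈ X₀`, hence `ξ - Dc = a - Ec ∈ X₀`. If `g ∈ X₀`
and `Dg ∈ X₀`, then `x·g = Dg - Eg` lies both in `X₀` and in the span of the monomials containing
`x`. These spans meet only in `0`, because the monomials of independent sets are linearly
independent: the algebra acts on the free module on finite sets of generators, `xᵢ` acting as a
signed creation operator, and applying `ξ` to `e_∅` reads off its coefficients. So `x·g = 0`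
and `g ∈ Y_x`. Taking `g = ξ - Dc` for a cycle `ξ`, and `g = f - Dc` for a boundary `Df ∈ Y_x`,
gives the two halves of `H(X) ≅ H(Y_x)`.
-/

noncomputable section
open Module LinearMap

/-- The generator `xᵢ` of the exterior (Grassmann) algebra on the generating set `V`. -/
def gGen (K : Type*) [Field K] (V : Type*) [DecidableEq V] (i : V) :
    ExteriorAlgebra K (V → K) :=
  ExteriorAlgebra.ι K (Pi.single i 1)

/-- The relation identifying with `0` the quadratic monomials `xᵢxⱼ` for edges `{i,j}`
of the graph `G`. -/
def graphRel (K : Type*) [Field K] (V : Type*) [DecidableEq V] (G : SimpleGraph V) :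
    ExteriorAlgebra K (V → K) → ExteriorAlgebra K (V → K) → Prop :=
  fun u v => ∃ i j : V, G.Adj i j ∧ u = gGen K V i * gGen K V j ∧ v = 0

/-- The monomial quotient `A_G = Gr(V)/⟨xᵢxⱼ : {i,j} ∈ E(G)⟩` of the Grassmann algebra. -/
abbrev GraphAlg (K : Type*) [Field K] (V : Type*) [DecidableEq V] (G : SimpleGraph V) :
    Type _ :=
  RingQuot (graphRel K V G)

/-- The differential `D(ξ) = (Σ_{x∈V} x)·ξ` on `A_G`. -/
def graphD (K : Type*) [Field K] (V : Type*) [Fintype V] [DecidableEq V]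
    (G : SimpleGraph V) : GraphAlg K V G →ₗ[K] GraphAlg K V G :=
  LinearMap.mulLeft K (∑ i : V, RingQuot.mkAlgHom K (graphRel K V G) (gGen K V i))

/-- The dimension of the homology `H(A_G) = ker D / im D` (as `im D ⊆ ker D`). -/
def graphHdim (K : Type*) [Field K] (V : Type*) [Fintype V] [DecidableEq V]
    (G : SimpleGraph V) : ℕ :=
  finrank K ↥(ker (graphD K V G)) - finrank K ↥(range (graphD K V G))

end

noncomputable section
open Module LinearMap

/-- The square-free monomial `x_{i₁}⋯x_{i_k}` (indices increasing) of `A_G` attached to a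
set `S` of generators. -/
def gMon (K : Type*) [Field K] (N : ℕ) (G : SimpleGraph (Fin N)) (S : Finset (Fin N)) :
    GraphAlg K (Fin N) G :=
  ((S.sort (· ≤ ·)).map fun i => RingQuot.mkAlgHom K (graphRel K (Fin N) G) (gGen K (Fin N) i)).prod

/-- The subspace `Y_x`: the span of the monomials which are nonzero in `X`, do not contain
`x`, and are annihilated by left multiplication by `x`. -/
def Yx (K : Type*) [Field K] (N : ℕ) (G : SimpleGraph (Fin N)) (x : Fin N) :
    Submodule K (GraphAlg K (Fin N) G) :=
  Submodule.span K {u | ∃ S : Finset (Fin N), x ∉ S ∧ gMon K N G S ≠ 0 ∧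
    RingQuot.mkAlgHom K (graphRel K (Fin N) G) (gGen K (Fin N) x) * gMon K N G S = 0 ∧
    u = gMon K N G S}

end

noncomputable section

open Module LinearMap Finset
open scoped Classical

theorem sum_mul_sum_self_eq_zero {R ι : Type*} [NonUnitalNonAssocRing R] (s : Finset ι)
    (a : ι → R) (hsq : ∀ i, a i * a i = 0) (hcomm : ∀ i j, a i * a j + a j * a i = 0) :
    (∑ i ∈ s, a i) * (∑ i ∈ s, a i) = 0 := by
  induction s using Finset.induction_on with
  | empty => simp
  | insert k s hk ih =>
    have hcross : a k * ∑ i ∈ s, a i + (∑ i ∈ s, a i) * a k = 0 := by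
      rw [Finset.mul_sum, Finset.sum_mul, ← Finset.sum_add_distrib]
      exact Finset.sum_eq_zero fun j _ => hcomm k j
    rw [Finset.sum_insert hk, add_mul, mul_add, mul_add, hsq, ih, zero_add, add_zero]
    exact hcross

namespace GraphAlg

variable {K : Type*} [Field K]

section Generators

variable {V : Type*} [DecidableEq V] {G : SimpleGraph V}

variable (K G) in
def gen (i : V) : GraphAlg K V G :=
  RingQuot.mkAlgHom K (graphRel K V G) (gGen K V i)

theorem gen_mul_gen_comm (i j : V) : gen K G i * gen K G j = -(gen K G j * gen K G i) :=
  eq_neg_of_add_eq_zero_left <| by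
    rw [gen, gen, ← map_mul, ← map_mul, ← map_add, gGen, gGen,
      ExteriorAlgebra.ι_add_mul_swap, map_zero]

theorem gen_mul_self (i : V) : gen K G i * gen K G i = 0 := by
  rw [gen, ← map_mul, gGen, ExteriorAlgebra.ι_sq_zero, map_zero]

theorem gen_mul_gen_of_adj {i j : V} (h : G.Adj i j) : gen K G i * gen K G j = 0 := by
  rw [gen, gen, ← map_mul, ← map_zero (RingQuot.mkAlgHom K (graphRel K V G))]
  exact RingQuot.mkAlgHom_rel K ⟨i, j, h, rfl, rfl⟩

variable [Fintype V]

theorem graphD_apply (ξ : GraphAlg K V G) : graphD K V G ξ = (∑ i, gen K G i) * ξ := rfl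

theorem graphD_graphD (ξ : GraphAlg K V G) : graphD K V G (graphD K V G ξ) = 0 := by
  have hsum : ∑ i, gen K G i = RingQuot.mkAlgHom K (graphRel K V G)
      (ExteriorAlgebra.ι K (∑ i, (Pi.single i 1 : V → K))) := by
    simp only [map_sum]; rfl
  rw [graphD_apply, graphD_apply, ← mul_assoc, hsum, ← map_mul, ExteriorAlgebra.ι_sq_zero,
    map_zero, zero_mul]

theorem graphD_sub_gen_mul (x : V) (ξ : GraphAlg K V G) :
    graphD K V G ξ - gen K G x * ξ = ∑ i ∈ univ.erase x, gen K G i * ξ := by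
  rw [graphD_apply, ← add_sum_erase _ _ (mem_univ x), add_mul, Finset.sum_mul,
    add_sub_cancel_left]

theorem graphD_sub_gen_mul_mem {x : V} {p : Submodule K (GraphAlg K V G)}
    (hp : ∀ i ≠ x, ∀ u ∈ p, gen K G i * u ∈ p) {ξ : GraphAlg K V G} (hξ : ξ ∈ p) :
    graphD K V G ξ - gen K G x * ξ ∈ p := by
  rw [graphD_sub_gen_mul]
  exact sum_mem fun i hi => hp i (ne_of_mem_erase hi) ξ hξ

end Generators

variable {N : ℕ} {G : SimpleGraph (Fin N)}

section Monomials

variable (K) in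
def insertSign (i : Fin N) (S : Finset (Fin N)) : K := (-1) ^ #{j ∈ S | j < i}

theorem insertSign_mul_self (i : Fin N) (S : Finset (Fin N)) :
    insertSign K i S * insertSign K i S = 1 := by
  simp [insertSign, ← mul_pow]

theorem insertSign_insert {i j : Fin N} {S : Finset (Fin N)} (hj : j ∉ S) :
    insertSign K i (insert j S) = if j < i then -insertSign K i S else insertSign K i S := by
  by_cases hji : j < i
  · rw [insertSign, filter_insert, if_pos hji, card_insert_of_notMem (by simp [hj]), pow_succ,
      mul_neg_one, if_pos hji, insertSign]
  · rw [insertSign, filter_insert, if_neg hji, if_neg hji, insertSign]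

theorem insertSign_of_forall_lt {i : Fin N} {S : Finset (Fin N)} (h : ∀ j ∈ S, i < j) :
    insertSign K i S = 1 := by
  rw [insertSign, filter_false_of_mem fun j hj hji => lt_asymm hji (h j hj), card_empty,
    pow_zero]

theorem insertSign_mul_insertSign_insert_comm {i j : Fin N} {S : Finset (Fin N)} (hij : i ≠ j)
    (hi : i ∉ S) (hj : j ∉ S) :
    insertSign K j S * insertSign K i (insert j S) =
      -(insertSign K i S * insertSign K j (insert i S)) := by
  rw [insertSign_insert hj, insertSign_insert hi]
  rcases lt_or_gt_of_ne hij with h | h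
  · rw [if_neg (lt_asymm h), if_pos h]; ring
  · rw [if_pos h, if_neg (lt_asymm h)]; ring

theorem gMon_empty : gMon K N G ∅ = 1 := by
  simp [gMon]

theorem gMon_insert_of_forall_lt {i : Fin N} {S : Finset (Fin N)} (h : ∀ j ∈ S, i < j) :
    gMon K N G (insert i S) = gen K G i * gMon K N G S := by
  rw [gMon, sort_insert _ (fun j hj => (h j hj).le) fun hi => lt_irrefl i (h i hi)]
  rfl

theorem gen_mul_gMon {i : Fin N} {S : Finset (Fin N)} (hi : i ∉ S) :
    gen K G i * gMon K N G S = insertSign K i S • gMon K N G (insert i S) := by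
  induction S using Finset.induction_on_min with
  | empty => rw [gMon_empty, gMon_insert_of_forall_lt (by simp), insertSign_of_forall_lt (by simp),
      one_smul, mul_one, gMon_empty, mul_one]
  | insert a S ha ih =>
    have hia : i ≠ a := fun h => hi (h ▸ mem_insert_self a S)
    have haS : a ∉ S := fun h => lt_irrefl a (ha a h)
    rcases lt_or_gt_of_ne hia with hlt | hgt
    · have hmin : ∀ j ∈ insert a S, i < j := by
        simpa [hlt] using fun j hj => hlt.trans (ha j hj)
      rw [insertSign_of_forall_lt hmin, one_smul, gMon_insert_of_forall_lt hmin]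
    · have hmin : ∀ j ∈ insert i S, a < j := by simpa [hgt] using ha
      rw [gMon_insert_of_forall_lt ha, ← mul_assoc, gen_mul_gen_comm, neg_mul, mul_assoc,
        ih (fun h => hi (mem_insert_of_mem h)), insertSign_insert haS, if_pos hgt,
        Finset.insert_comm, gMon_insert_of_forall_lt hmin, mul_smul_comm, neg_smul]

theorem gMon_insert {i : Fin N} {S : Finset (Fin N)} (hi : i ∉ S) :
    gMon K N G (insert i S) = insertSign K i S • (gen K G i * gMon K N G S) := by
  rw [gen_mul_gMon hi, smul_smul, insertSign_mul_self, one_smul]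

theorem gMon_eq_gen_mul_of_mem {i : Fin N} {S : Finset (Fin N)} (hi : i ∈ S) :
    gMon K N G S = insertSign K i (S.erase i) • (gen K G i * gMon K N G (S.erase i)) := by
  rw [← gMon_insert (notMem_erase i S), insert_erase hi]

theorem gen_mul_gMon_of_mem {i : Fin N} {S : Finset (Fin N)} (hi : i ∈ S) :
    gen K G i * gMon K N G S = 0 := by
  rw [gMon_eq_gen_mul_of_mem hi, mul_smul_comm, ← mul_assoc, gen_mul_self, zero_mul, smul_zero]

theorem gMon_eq_zero_of_not_isIndepSet {S : Finset (Fin N)} (h : ¬G.IsIndepSet (S : Set (Fin N))) :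
    gMon K N G S = 0 := by
  obtain ⟨i, hi, j, hj, hij, hadj⟩ : ∃ i ∈ S, ∃ j ∈ S, i ≠ j ∧ G.Adj i j := by
    simpa [SimpleGraph.IsIndepSet, Set.Pairwise] using h
  rw [gMon_eq_gen_mul_of_mem hi, gMon_eq_gen_mul_of_mem (mem_erase.2 ⟨hij.symm, hj⟩),
    mul_smul_comm, ← mul_assoc, gen_mul_gen_of_adj hadj, zero_mul, smul_zero, smul_zero]

variable (K G) in
def monSpan (P : Finset (Fin N) → Prop) : Submodule K (GraphAlg K (Fin N) G) :=
  Submodule.span K (gMon K N G '' {S | P S})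

theorem gMon_mem_monSpan {P : Finset (Fin N) → Prop} {S : Finset (Fin N)} (hS : P S) :
    gMon K N G S ∈ monSpan K G P :=
  Submodule.subset_span ⟨S, hS, rfl⟩

theorem mul_mem_monSpan {P Q : Finset (Fin N) → Prop} {a u : GraphAlg K (Fin N) G}
    (h : ∀ S, P S → a * gMon K N G S ∈ monSpan K G Q) (hu : u ∈ monSpan K G P) :
    a * u ∈ monSpan K G Q :=
  (Submodule.span_le (p := (monSpan K G Q).comap (mulLeft K a))).2
    (by rintro _ ⟨S, hS, rfl⟩; exact h S hS) hu

theorem gen_mul_mem_monSpan {P Q : Finset (Fin N) → Prop} {i : Fin N}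
    (h : ∀ S, P S → i ∉ S → Q (insert i S)) {u : GraphAlg K (Fin N) G}
    (hu : u ∈ monSpan K G P) : gen K G i * u ∈ monSpan K G Q := by
  refine mul_mem_monSpan (fun S hS => ?_) hu
  by_cases hi : i ∈ S
  · rw [gen_mul_gMon_of_mem hi]
    exact zero_mem _
  · rw [gen_mul_gMon hi]
    exact Submodule.smul_mem _ _ (gMon_mem_monSpan (h S hS hi))

theorem mkAlgHom_mul_mem_monSpan_true (a : ExteriorAlgebra K (Fin N → K))
    {u : GraphAlg K (Fin N) G} (hu : u ∈ monSpan K G (fun _ => True)) :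
    RingQuot.mkAlgHom K (graphRel K (Fin N) G) a * u ∈ monSpan K G (fun _ => True) := by
  induction a using ExteriorAlgebra.induction generalizing u with
  | algebraMap r =>
    rw [AlgHom.commutes, ← Algebra.smul_def]
    exact Submodule.smul_mem _ _ hu
  | ι v =>
    rw [← (Pi.basisFun K (Fin N)).sum_repr v, map_sum, map_sum, Finset.sum_mul]
    refine Submodule.sum_mem _ fun i _ => ?_
    have hgen : RingQuot.mkAlgHom K (graphRel K (Fin N) G)
        (ExteriorAlgebra.ι K (Pi.basisFun K (Fin N) i)) = gen K G i := by
      rw [Pi.basisFun_apply]; rfl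
    rw [map_smul, map_smul, smul_mul_assoc, hgen]
    exact Submodule.smul_mem _ _ (gen_mul_mem_monSpan (by simp) hu)
  | mul a b ha hb =>
    rw [map_mul, mul_assoc]
    exact ha (hb hu)
  | add a b ha hb =>
    rw [map_add, add_mul]
    exact add_mem (ha hu) (hb hu)

theorem monSpan_true : monSpan K G (fun _ : Finset (Fin N) => True) = ⊤ := by
  refine eq_top_iff.2 fun ξ _ => ?_
  obtain ⟨a, rfl⟩ := RingQuot.mkAlgHom_surjective K (graphRel K (Fin N) G) ξ
  simpa [gMon_empty] using mkAlgHom_mul_mem_monSpan_true a (gMon_mem_monSpan (S := ∅) trivial)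

end Monomials

section Fock

variable (K G) in
def creationOp (i : Fin N) : (Finset (Fin N) →₀ K) →ₗ[K] (Finset (Fin N) →₀ K) :=
  Finsupp.linearCombination K fun S =>
    if i ∉ S ∧ G.IsIndepSet (↑(insert i S) : Set (Fin N)) then
      insertSign K i S • Finsupp.single (insert i S) 1
    else 0

theorem creationOp_single (i : Fin N) (S : Finset (Fin N)) :
    creationOp K G i (Finsupp.single S 1) =
      if i ∉ S ∧ G.IsIndepSet (↑(insert i S) : Set (Fin N)) then
        insertSign K i S • Finsupp.single (insert i S) 1
      else 0 := by
  rw [creationOp, Finsupp.linearCombination_single, one_smul]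

theorem creationOp_creationOp_single (i j : Fin N) (S : Finset (Fin N)) :
    creationOp K G i (creationOp K G j (Finsupp.single S 1)) =
      if i ≠ j ∧ i ∉ S ∧ j ∉ S ∧ G.IsIndepSet (↑(insert i (insert j S)) : Set (Fin N))
      then
        (insertSign K j S * insertSign K i (insert j S)) •
          Finsupp.single (insert i (insert j S)) 1
      else 0 := by
  have hmono : G.IsIndepSet (↑(insert i (insert j S)) : Set (Fin N)) →
      G.IsIndepSet (↑(insert j S) : Set (Fin N)) :=
    fun h => h.mono (by simp [Set.subset_insert])
  by_cases hj : j ∉ S ∧ G.IsIndepSet (↑(insert j S) : Set (Fin N))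
  · rw [creationOp_single, if_pos hj, map_smul, creationOp_single, smul_ite, smul_zero, smul_smul,
      mul_comm]
    refine if_congr ?_ rfl rfl
    simp only [mem_insert, not_or]
    tauto
  · rw [creationOp_single, if_neg hj, map_zero, if_neg]
    exact fun h => hj ⟨h.2.2.1, hmono h.2.2.2⟩

theorem creationOp_mul_self (i : Fin N) : creationOp K G i * creationOp K G i = 0 := by
  ext S : 2
  simp [creationOp_creationOp_single]

theorem creationOp_mul_add_mul_swap (i j : Fin N) :
    creationOp K G i * creationOp K G j + creationOp K G j * creationOp K G i = 0 := by
  ext S : 2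
  simp only [LinearMap.comp_apply, Finsupp.lsingle_apply, LinearMap.add_apply, Module.End.mul_apply,
    LinearMap.zero_apply, creationOp_creationOp_single]
  by_cases h :
    i ≠ j ∧ i ∉ S ∧ j ∉ S ∧ G.IsIndepSet (↑(insert i (insert j S)) : Set (Fin N))
  · obtain ⟨hij, hi, hj, hind⟩ := h
    rw [if_pos ⟨hij, hi, hj, hind⟩, if_pos ⟨hij.symm, hj, hi, insert_comm i j S ▸ hind⟩,
      insert_comm j i S, ← add_smul, insertSign_mul_insertSign_insert_comm hij hi hj,
      neg_add_cancel, zero_smul]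
  · rw [if_neg h, if_neg, add_zero]
    rintro ⟨hji, hj, hi, hind⟩
    exact h ⟨hji.symm, hi, hj, insert_comm i j S ▸ hind⟩

theorem creationOp_mul_of_adj {i j : Fin N} (h : G.Adj i j) :
    creationOp K G i * creationOp K G j = 0 := by
  ext S : 2
  simp only [LinearMap.comp_apply, Finsupp.lsingle_apply, Module.End.mul_apply,
    LinearMap.zero_apply, creationOp_creationOp_single]
  rw [if_neg]
  rintro ⟨hij, -, -, hind⟩
  exact hind (by simp) (by simp) hij h

variable (K G) in
def creationLift :
    ExteriorAlgebra K (Fin N → K) →ₐ[K] Module.End K (Finset (Fin N) →₀ K) :=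
  ExteriorAlgebra.lift K ⟨Fintype.linearCombination K (creationOp K G), fun v => by
    rw [Fintype.linearCombination_apply]
    refine sum_mul_sum_self_eq_zero univ (fun i => v i • creationOp K G i) (fun i => ?_)
      (fun i j => ?_)
    · rw [smul_mul_smul_comm, creationOp_mul_self, smul_zero]
    · rw [smul_mul_smul_comm, smul_mul_smul_comm, mul_comm (v j), ← smul_add,
        creationOp_mul_add_mul_swap, smul_zero]⟩

theorem creationLift_gGen (i : Fin N) : creationLift K G (gGen K (Fin N) i) = creationOp K G i := by
  rw [creationLift, gGen, ExteriorAlgebra.lift_ι_apply]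
  simp [Fintype.linearCombination_apply_single]

variable (K G) in
def fockRep : GraphAlg K (Fin N) G →ₐ[K] Module.End K (Finset (Fin N) →₀ K) :=
  RingQuot.liftAlgHom K ⟨creationLift K G, by
    rintro _ _ ⟨i, j, h, rfl, rfl⟩
    rw [map_mul, creationLift_gGen, creationLift_gGen, creationOp_mul_of_adj h, map_zero]⟩

theorem fockRep_gen (i : Fin N) : fockRep K G (gen K G i) = creationOp K G i := by
  rw [fockRep, gen, RingQuot.liftAlgHom_mkAlgHom_apply, creationLift_gGen]

variable (K G) in
def toFock : GraphAlg K (Fin N) G →ₗ[K] (Finset (Fin N) →₀ K) :=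
  LinearMap.applyₗ (Finsupp.single ∅ 1) ∘ₗ (fockRep K G).toLinearMap

theorem toFock_gen_mul (i : Fin N) (ξ : GraphAlg K (Fin N) G) :
    toFock K G (gen K G i * ξ) = creationOp K G i (toFock K G ξ) := by
  simp [toFock, fockRep_gen]

theorem toFock_gMon (S : Finset (Fin N)) :
    toFock K G (gMon K N G S) =
      if G.IsIndepSet (S : Set (Fin N)) then Finsupp.single S 1 else 0 := by
  induction S using Finset.induction_on with
  | empty => simp [gMon_empty, toFock]
  | insert i S hi ih =>
    rw [gMon_insert hi, map_smul, toFock_gen_mul, ih]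
    by_cases hS : G.IsIndepSet (S : Set (Fin N))
    · rw [if_pos hS, creationOp_single]
      by_cases hiS : G.IsIndepSet (↑(insert i S) : Set (Fin N))
      · rw [if_pos ⟨hi, hiS⟩, if_pos hiS, smul_smul, insertSign_mul_self, one_smul]
      · rw [if_neg fun h => hiS h.2, if_neg hiS, smul_zero]
    · rw [if_neg hS, map_zero, smul_zero, if_neg fun h => hS (h.mono (by simp))]

theorem toFock_injective : Function.Injective (toFock K G) := by
  let ofFock := Finsupp.linearCombination K (gMon K N G)
  have hinv : ofFock ∘ₗ toFock K G = LinearMap.id := by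
    refine LinearMap.ext_on (monSpan_true (K := K) (G := G)) ?_
    rintro _ ⟨S, -, rfl⟩
    by_cases hS : G.IsIndepSet (S : Set (Fin N))
    · simp [ofFock, toFock_gMon, hS]
    · simp [gMon_eq_zero_of_not_isIndepSet hS]
  exact Function.LeftInverse.injective (g := ofFock) fun ξ => congr($hinv ξ)

theorem map_toFock_monSpan_le (P : Finset (Fin N) → Prop) :
    (monSpan K G P).map (toFock K G) ≤ Finsupp.supported K K {S | P S} := by
  rw [monSpan, Submodule.map_span_le]
  rintro _ ⟨S, hS, rfl⟩
  rw [toFock_gMon]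
  split_ifs
  · exact Finsupp.single_mem_supported K 1 hS
  · exact zero_mem _

theorem disjoint_monSpan {P Q : Finset (Fin N) → Prop} (h : ∀ S, P S → ¬Q S) :
    Disjoint (monSpan K G P) (monSpan K G Q) := by
  refine Submodule.disjoint_def.2 fun v hP hQ => toFock_injective ?_
  rw [map_zero]
  exact Submodule.disjoint_def.1
    (Finsupp.disjoint_supported_supported (Set.disjoint_left.2 fun S => h S)) _
    (map_toFock_monSpan_le P ⟨v, hP, rfl⟩) (map_toFock_monSpan_le Q ⟨v, hQ, rfl⟩)

end Fock

section Contraction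

variable (x : Fin N)

variable (K G) in
def contract : GraphAlg K (Fin N) G →ₗ[K] GraphAlg K (Fin N) G :=
  Finsupp.linearCombination K
      (fun S => insertSign K x (S.erase x) • gMon K N G (S.erase x)) ∘ₗ toFock K G

theorem contract_gen_mul_gMon {S : Finset (Fin N)} (hx : x ∉ S)
    (hind : G.IsIndepSet (↑(insert x S) : Set (Fin N))) :
    contract K G x (gen K G x * gMon K N G S) = gMon K N G S := by
  rw [contract, LinearMap.comp_apply, gen_mul_gMon hx, map_smul, toFock_gMon, if_pos hind,
    map_smul, Finsupp.linearCombination_single, one_smul, erase_insert hx, smul_smul,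
    insertSign_mul_self, one_smul]

theorem Yx_eq_monSpan :
    Yx K N G x = monSpan K G (fun S => x ∉ S ∧ gen K G x * gMon K N G S = 0) := by
  refine le_antisymm (Submodule.span_mono ?_) (Submodule.span_le.2 ?_)
  · rintro _ ⟨S, hx, -, h0, rfl⟩
    exact ⟨S, ⟨hx, h0⟩, rfl⟩
  · rintro _ ⟨S, ⟨hx, h0⟩, rfl⟩
    by_cases hS : gMon K N G S = 0
    · rw [SetLike.mem_coe, hS]
      exact zero_mem _
    · exact Submodule.subset_span ⟨S, hx, hS, h0, rfl⟩

theorem sub_contract_mem_Yx {f : GraphAlg K (Fin N) G} (hf : f ∈ monSpan K G (fun S => x ∉ S)) :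
    f - contract K G x (gen K G x * f) ∈ Yx K N G x := by
  rw [Yx_eq_monSpan]
  refine (Submodule.span_le (p := (monSpan K G _).comap
    (LinearMap.id - contract K G x ∘ₗ mulLeft K (gen K G x)))).2 ?_ hf
  rintro _ ⟨S, hx, rfl⟩
  by_cases hind : G.IsIndepSet (↑(insert x S) : Set (Fin N))
  · simp [contract_gen_mul_gMon x hx hind]
  · have h0 : gen K G x * gMon K N G S = 0 := by
      rw [gen_mul_gMon hx, gMon_eq_zero_of_not_isIndepSet hind, smul_zero]
    rw [SetLike.mem_coe, Submodule.mem_comap, LinearMap.sub_apply, LinearMap.id_apply,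
      LinearMap.comp_apply, mulLeft_apply, h0, map_zero, sub_zero]
    exact gMon_mem_monSpan ⟨hx, h0⟩

end Contraction

section Homology

variable {x : Fin N}

theorem gen_mul_eq_zero_of_mem_Yx {u : GraphAlg K (Fin N) G} (hu : u ∈ Yx K N G x) :
    gen K G x * u = 0 := by
  rw [Yx_eq_monSpan] at hu
  have hker : monSpan K G (fun S => x ∉ S ∧ gen K G x * gMon K N G S = 0) ≤
      LinearMap.ker (mulLeft K (gen K G x)) :=
    Submodule.span_le.2 fun _ ⟨_, ⟨_, h0⟩, hS⟩ => hS ▸ h0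
  exact hker hu

theorem gen_mul_mem_Yx {i : Fin N} (hix : i ≠ x) {u : GraphAlg K (Fin N) G}
    (hu : u ∈ Yx K N G x) : gen K G i * u ∈ Yx K N G x := by
  rw [Yx_eq_monSpan] at hu ⊢
  refine mul_mem_monSpan (fun S ⟨hx, h0⟩ => ?_) hu
  by_cases hi : i ∈ S
  · rw [gen_mul_gMon_of_mem hi]
    exact zero_mem _
  · rw [gen_mul_gMon hi]
    refine Submodule.smul_mem _ _ (gMon_mem_monSpan ⟨?_, ?_⟩)
    · simp [hx, hix.symm]
    · rw [gMon_insert hi, mul_smul_comm, ← mul_assoc, gen_mul_gen_comm, neg_mul, mul_assoc, h0,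
        mul_zero, neg_zero, smul_zero]

theorem gen_mul_mem_monSpan_notMem {i : Fin N} (hix : i ≠ x) {u : GraphAlg K (Fin N) G}
    (hu : u ∈ monSpan K G (fun S => x ∉ S)) :
    gen K G i * u ∈ monSpan K G (fun S => x ∉ S) :=
  gen_mul_mem_monSpan (fun S hx _ => by simp [hx, hix.symm]) hu

theorem graphD_mem_Yx {u : GraphAlg K (Fin N) G} (hu : u ∈ Yx K N G x) :
    graphD K (Fin N) G u ∈ Yx K N G x := by
  simpa [gen_mul_eq_zero_of_mem_Yx hu] using
    graphD_sub_gen_mul_mem (fun i hi u hu => gen_mul_mem_Yx hi hu) hu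

theorem Yx_le_monSpan_notMem : Yx K N G x ≤ monSpan K G (fun S => x ∉ S) :=
  Submodule.span_mono fun _ ⟨S, hx, _, _, hS⟩ => ⟨S, hx, hS.symm⟩

theorem mem_Yx_of_gen_mul_eq_zero {f : GraphAlg K (Fin N) G}
    (hf : f ∈ monSpan K G (fun S => x ∉ S)) (h : gen K G x * f = 0) : f ∈ Yx K N G x := by
  simpa [h] using sub_contract_mem_Yx x hf

theorem exists_sub_graphD_mem_monSpan (ξ : GraphAlg K (Fin N) G) :
    ∃ c, ξ - graphD K (Fin N) G c ∈ monSpan K G (fun S => x ∉ S) := by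
  have hdec : ξ ∈ monSpan K G (fun S => x ∉ S) ⊔
      (monSpan K G (fun S => x ∉ S)).map (mulLeft K (gen K G x)) := by
    refine (show monSpan K G (fun _ => True) ≤ _ from Submodule.span_le.2 ?_)
      (by rw [monSpan_true]; trivial)
    rintro _ ⟨S, -, rfl⟩
    by_cases hx : x ∈ S
    · refine Submodule.mem_sup_right ⟨_, Submodule.smul_mem _ (insertSign K x (S.erase x))
        (gMon_mem_monSpan (notMem_erase x S)), ?_⟩
      rw [mulLeft_apply, mul_smul_comm, ← gMon_eq_gen_mul_of_mem hx]
    · exact Submodule.mem_sup_left (gMon_mem_monSpan hx)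
  obtain ⟨a, ha, _, ⟨c, hc, rfl⟩, rfl⟩ := Submodule.mem_sup.1 hdec
  refine ⟨c, ?_⟩
  rw [mulLeft_apply, show a + gen K G x * c - graphD K (Fin N) G c =
    a - (graphD K (Fin N) G c - gen K G x * c) by abel]
  exact sub_mem ha (graphD_sub_gen_mul_mem (fun i hi u hu => gen_mul_mem_monSpan_notMem hi hu) hc)

theorem mem_Yx_of_graphD_mem_monSpan {g : GraphAlg K (Fin N) G}
    (hg : g ∈ monSpan K G (fun S => x ∉ S))
    (hD : graphD K (Fin N) G g ∈ monSpan K G (fun S => x ∉ S)) : g ∈ Yx K N G x := by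
  refine mem_Yx_of_gen_mul_eq_zero hg ?_
  have hx1 : gen K G x * g ∈ monSpan K G (fun S => x ∈ S) :=
    gen_mul_mem_monSpan (fun S _ _ => mem_insert_self x S) hg
  have hx0 : gen K G x * g ∈ monSpan K G (fun S => x ∉ S) := by
    simpa using sub_mem hD
      (graphD_sub_gen_mul_mem (fun i hi u hu => gen_mul_mem_monSpan_notMem hi hu) hg)
  exact Submodule.disjoint_def.1 (disjoint_monSpan fun S h h' => h h') _ hx0 hx1

end Homology

end GraphAlg

end

open GraphAlg

/-- For a monomial quotient `X = Gr(V)/⟨r₁,…,r_m⟩` of the exterior algebra on generators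
`V = {x, x₂, …, x_N}` with differential `D(ξ) = (x + x₂ + ⋯ + x_N)ξ`, the span `Y_x` of
the monomials not containing `x` and annihilated by `x` is a subcomplex, and the
inclusion `Y_x ↪ X` is a quasi-isomorphism: every cycle is a boundary plus a cycle in
`Y_x`, and a cycle of `Y_x` bounding in `X` already bounds in `Y_x`, so `H(X) ≅ H(Y_x)`. -/
theorem stmt10 (K : Type*) [Field K] (N : ℕ) (G : SimpleGraph (Fin N)) (x : Fin N) :
    Submodule.map (graphD K (Fin N) G) (Yx K N G x) ≤ Yx K N G x ∧
    (∀ ξ ∈ LinearMap.ker (graphD K (Fin N) G), ∃ f : GraphAlg K (Fin N) G,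
      ξ - graphD K (Fin N) G f ∈ Yx K N G x ⊓ LinearMap.ker (graphD K (Fin N) G)) ∧
    (∀ h ∈ Yx K N G x ⊓ LinearMap.ker (graphD K (Fin N) G),
      (∃ f : GraphAlg K (Fin N) G, graphD K (Fin N) G f = h) →
      ∃ g ∈ Yx K N G x, graphD K (Fin N) G g = h) := by
  refine ⟨?_, fun ξ hξ => ?_, fun h hh ⟨f, hf⟩ => ?_⟩
  · rintro _ ⟨u, hu, rfl⟩
    exact graphD_mem_Yx hu
  · obtain ⟨c, hc⟩ := exists_sub_graphD_mem_monSpan (x := x) ξ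
    have hcycle : graphD K (Fin N) G (ξ - graphD K (Fin N) G c) = 0 := by
      rw [map_sub, LinearMap.mem_ker.1 hξ, graphD_graphD, sub_zero]
    exact ⟨c, mem_Yx_of_graphD_mem_monSpan hc (hcycle ▸ zero_mem _), hcycle⟩
  · obtain ⟨c, hc⟩ := exists_sub_graphD_mem_monSpan (x := x) f
    have hbound : graphD K (Fin N) G (f - graphD K (Fin N) G c) = h := by
      rw [map_sub, hf, graphD_graphD, sub_zero]
    exact ⟨_, mem_Yx_of_graphD_mem_monSpan hc (hbound ▸ Yx_le_monSpan_notMem hh.1), hbound⟩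
end
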